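/- If S is a normal bounded operator on a complex Hilbert space H, then for every bounded operator X on H, ‖S²X‖ + ‖XS²‖ ≥ 2‖SXS‖. -/

import Mathlib

/-!
Put `T = S X S`. By normality `T⋆T = u c` with `u = S⋆X⋆` and `c = S S⋆ X S`, and
`‖S R‖ = ‖S⋆ R‖` for every `R`, so the factors of `c u = (S S⋆ X)(S S⋆ X⋆)` have norms `‖S² X‖`
and `‖X S²‖`. As `T⋆T` is selfadjoint, `‖T‖² = r(T⋆T) = r(u c) = r(c u) ≤ ‖c u‖ ≤ ‖S² X‖ ‖X S²‖`,
and AM-GM concludes.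
-/

open scoped ENNReal

theorem spectrum.spectralRadius_mul_comm {𝕜 A : Type*} [NormedField 𝕜] [Ring A] [Algebra 𝕜 A]
    (a b : A) : spectralRadius 𝕜 (a * b) = spectralRadius 𝕜 (b * a) := by
  suffices h : ∀ a b : A, spectralRadius 𝕜 (a * b) ≤ spectralRadius 𝕜 (b * a) from
    le_antisymm (h a b) (h b a)
  intro a b
  refine iSup₂_le fun k hk => ?_
  rcases eq_or_ne k 0 with rfl | hk0
  · simp
  · have hk' : k ∈ spectrum 𝕜 (b * a) \ {0} := by
      rw [← spectrum.nonzero_mul_comm]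
      exact ⟨hk, hk0⟩
    exact le_iSup₂ (f := fun k (_ : k ∈ spectrum 𝕜 (b * a)) => (‖k‖₊ : ℝ≥0∞)) k hk'.1

theorem CStarAlgebra.norm_sq_le_norm_mul_of_star_mul_self_eq {A : Type*} [CStarAlgebra A]
    {a x y : A} (h : star a * a = x * y) : ‖a‖ ^ 2 ≤ ‖y * x‖ := by
  cases subsingleton_or_nontrivial A
  · simp [Subsingleton.elim a 0]
  rw [← CStarAlgebra.toReal_spectralRadius_star_mul_self_eq_norm_sq, h,
    spectrum.spectralRadius_mul_comm]
  exact ENNReal.toReal_le_coe_of_le_coe (spectrum.spectralRadius_le_nnnorm (y * x))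

theorem IsStarNormal.norm_mul_eq_norm_star_mul {A : Type*} [NonUnitalNormedRing A] [StarRing A]
    [CStarRing A] {a : A} (ha : IsStarNormal a) (b : A) : ‖a * b‖ = ‖star a * b‖ := by
  have hsq : ‖a * b‖ * ‖a * b‖ = ‖star a * b‖ * ‖star a * b‖ := by
    rw [← CStarRing.norm_star_mul_self, ← CStarRing.norm_star_mul_self, star_mul, star_mul,
      star_star, mul_assoc, ← mul_assoc (star a), mul_assoc (star b), ← mul_assoc a,
      ha.star_comm_self.eq]
  nlinarith [norm_nonneg (a * b), norm_nonneg (star a * b)]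

theorem IsStarNormal.two_mul_norm_mul_mul_le {A : Type*} [CStarAlgebra A] {s : A}
    (hs : IsStarNormal s) (x : A) : 2 * ‖s * x * s‖ ≤ ‖s ^ 2 * x‖ + ‖x * s ^ 2‖ := by
  have hss : star s * s = s * star s := hs.star_comm_self.eq
  have hleft : ‖s * star s * x‖ = ‖s ^ 2 * x‖ := by
    rw [← hss, mul_assoc, ← hs.norm_mul_eq_norm_star_mul, ← mul_assoc, sq]
  have hright : ‖s * star s * star x‖ = ‖x * s ^ 2‖ := by
    rw [mul_assoc, hs.norm_mul_eq_norm_star_mul, ← norm_star, sq]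
    simp only [star_mul, star_star, mul_assoc]
  have hsq : ‖s * x * s‖ ^ 2 ≤ ‖s ^ 2 * x‖ * ‖x * s ^ 2‖ :=
    calc ‖s * x * s‖ ^ 2 ≤ ‖(s * star s * x * s) * (star s * star x)‖ :=
          CStarAlgebra.norm_sq_le_norm_mul_of_star_mul_self_eq <| by
            simp only [star_mul, mul_assoc, ← mul_assoc (star s) s, hss]
      _ = ‖(s * star s * x) * (s * star s * star x)‖ := by noncomm_ring
      _ ≤ ‖s * star s * x‖ * ‖s * star s * star x‖ := norm_mul_le _ _
      _ = ‖s ^ 2 * x‖ * ‖x * s ^ 2‖ := by rw [hleft, hright]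
  nlinarith [norm_nonneg (s * x * s), norm_nonneg (s ^ 2 * x), norm_nonneg (x * s ^ 2),
    sq_nonneg (‖s ^ 2 * x‖ - ‖x * s ^ 2‖)]

theorem normal_agmi (H : Type*) [NormedAddCommGroup H] [InnerProductSpace ℂ H]
    [CompleteSpace H] (S : H →L[ℂ] H) (hS : (star S) * S = S * (star S))
    (X : H →L[ℂ] H) :
    ‖S ^ 2 * X‖ + ‖X * S ^ 2‖ ≥ 2 * ‖S * X * S‖ :=
  IsStarNormal.two_mul_norm_mul_mul_le ⟨hS⟩ X
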